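/- For every QUBO H on variables x_1,…,x_n there exist a WCNF φ whose variable set contains {x_1,…,x_n} and an integer Δ such that for every x ∈ {0,1}^n the minimum of cost(β) over all finite-cost assignments β of φ extending x equals H(x) + Δ; in particular, the restrictions to {x_1,…,x_n} of the minimum-cost assignments of φ are exactly the ground states of H. Moreover tw(φ) ≤ max(tw(H), 2), tw(φ) ≤ tw(H) + 1, itw(φ) ≤ max(itw(H), 2), and itw(φ) ≤ itw(H) + 1. -/

import Mathlib

open scoped Classical

/-- A literal: a propositional variable (indexed by a natural number) or its negation. -/
structure Lit where
  var : ℕ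
  pos : Bool
deriving DecidableEq

/-- A clause is a finite set of literals. -/
abbrev Clause := Finset Lit

/-- The variables occurring in a clause. -/
def Clause.varsOf (c : Clause) : Finset ℕ := c.image Lit.var

/-- A weighted CNF: a finite set of clauses with weights in `ℕ ∪ {∞}`. -/
structure WCNF where
  clauses : Finset Clause
  weight : Clause → ℕ∞

/-- An assignment satisfies a literal. -/
def satLit (β : ℕ → Bool) (l : Lit) : Prop := β l.var = l.pos

/-- An assignment satisfies a clause if it makes some literal true. -/
def satClause (β : ℕ → Bool) (c : Clause) : Prop := ∃ l ∈ c, satLit β l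

/-- The cost of an assignment: sum of the weights of the falsified clauses. -/
noncomputable def WCNF.costA (φ : WCNF) (β : ℕ → Bool) : ℕ∞ :=
  ∑ c ∈ φ.clauses.filter (fun c => ¬ satClause β c), φ.weight c

/-- The cost of a WCNF: the minimum cost over all assignments. -/
noncomputable def WCNF.cost (φ : WCNF) : ℕ∞ := ⨅ β : ℕ → Bool, φ.costA β

/-- The variables of a set of clauses. -/
def cnfVars (C : Finset Clause) : Finset ℕ := C.biUnion Clause.varsOf

/-- The variables of a WCNF. -/
def WCNF.vars (φ : WCNF) : Finset ℕ := cnfVars φ.clauses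

/-- The primal graph of a set of clauses: vertices are the variables (all of `ℕ`),
with an edge between distinct variables occurring together in a clause. -/
def primalOf (C : Finset Clause) : SimpleGraph ℕ :=
  SimpleGraph.fromRel (fun u v => ∃ c ∈ C, u ∈ c.varsOf ∧ v ∈ c.varsOf)

/-- The incidence graph of a set of clauses: the bipartite graph on variables and
clauses joining each clause to the variables it contains. -/
def incOf (C : Finset Clause) : SimpleGraph (ℕ ⊕ Clause) :=
  SimpleGraph.fromRel (fun a b =>
    ∃ x c, a = Sum.inl x ∧ b = Sum.inr c ∧ c ∈ C ∧ x ∈ c.varsOf)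

/-- A tree decomposition of a graph `G`: a tree `TG` together with finite bags such that
every vertex occurs in some bag, every edge is covered by a bag, and for each vertex the
nodes whose bags contain it induce a nonempty connected subgraph (hence a subtree). -/
structure TreeDecomp {V T : Type} (G : SimpleGraph V) (TG : SimpleGraph T) where
  isTree : TG.IsTree
  bag : T → Finset V
  covers_vertex : ∀ v : V, ∃ t, v ∈ bag t
  covers_edge : ∀ u v : V, G.Adj u v → ∃ t, u ∈ bag t ∧ v ∈ bag t
  connected : ∀ v : V, (TG.induce {t | v ∈ bag t}).Connected

/-- `G` has a tree decomposition of width at most `k`. -/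
def HasTD {V : Type} (G : SimpleGraph V) (k : ℕ) : Prop :=
  ∃ (T : Type) (TG : SimpleGraph T) (D : TreeDecomp G TG), ∀ t, (D.bag t).card ≤ k + 1

/-- The treewidth of a graph: the minimum width of a tree decomposition (`⊤` if none). -/
noncomputable def tw {V : Type} (G : SimpleGraph V) : ℕ∞ :=
  sInf {x : ℕ∞ | ∃ k : ℕ, x = k ∧ HasTD G k}

/-- The primal treewidth of a WCNF. -/
noncomputable def WCNF.tw (φ : WCNF) : ℕ∞ := _root_.tw (primalOf φ.clauses)

/-- The incidence treewidth of a WCNF. -/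
noncomputable def WCNF.itw (φ : WCNF) : ℕ∞ := _root_.tw (incOf φ.clauses)

/-- A (monotone) weighted CNF with integer weights. -/
structure ZWCNF where
  clauses : Finset Clause
  weight : Clause → ℤ

/-- Cost of an assignment for an integer-weighted CNF. -/
noncomputable def ZWCNF.costA (φ : ZWCNF) (β : ℕ → Bool) : ℤ :=
  ∑ c ∈ φ.clauses.filter (fun c => ¬ satClause β c), φ.weight c

/-- `v` is the minimum cost of `φ`. -/
def ZWCNF.IsMinCost (φ : ZWCNF) (v : ℤ) : Prop :=
  (∃ β, φ.costA β = v) ∧ ∀ β, v ≤ φ.costA β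

/-- A formula is monotone if every literal occurring in it is negative. -/
def ZWCNF.Mono (φ : ZWCNF) : Prop := ∀ c ∈ φ.clauses, ∀ l ∈ c, l.pos = false

noncomputable def ZWCNF.tw (φ : ZWCNF) : ℕ∞ := _root_.tw (primalOf φ.clauses)

noncomputable def ZWCNF.itw (φ : ZWCNF) : ℕ∞ := _root_.tw (incOf φ.clauses)

/-- A QUBO instance: `H(x) = Σ_i lin i * x_i + Σ_{i<j} quad i j * x_i x_j`
with integer weights supported on a finite set of variables. -/
structure QUBO where
  vars : Finset ℕ
  lin : ℕ → ℤ
  quad : ℕ → ℕ → ℤ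
  lin_supp : ∀ i, lin i ≠ 0 → i ∈ vars
  quad_supp : ∀ i j, quad i j ≠ 0 → i ∈ vars ∧ j ∈ vars
  quad_lt : ∀ i j, quad i j ≠ 0 → i < j

/-- Value of a Boolean, identifying `true` with `1` and `false` with `0`. -/
def bval (b : Bool) : ℤ := if b then 1 else 0

/-- Evaluation of a QUBO Hamiltonian on a `{0,1}`-assignment. -/
def QUBO.eval (H : QUBO) (x : ℕ → Bool) : ℤ :=
  (∑ i ∈ H.vars, H.lin i * bval (x i)) +
    ∑ i ∈ H.vars, ∑ j ∈ H.vars, H.quad i j * bval (x i) * bval (x j)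

/-- A ground state: an assignment minimizing `H`. -/
def QUBO.IsGround (H : QUBO) (x : ℕ → Bool) : Prop := ∀ y, H.eval x ≤ H.eval y

/-- `μ` is the minimum value of `H`. -/
def QUBO.IsMinVal (H : QUBO) (μ : ℤ) : Prop :=
  (∃ x, H.eval x = μ) ∧ ∀ x, μ ≤ H.eval x

/-- The primal graph of a QUBO: an edge `{i,j}` whenever the quadratic weight is nonzero. -/
def QUBO.primal (H : QUBO) : SimpleGraph ℕ :=
  SimpleGraph.fromRel (fun i j => H.quad i j ≠ 0)

/-- The incidence graph of a QUBO: bipartite graph on variables and nonzero terms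
(linear terms indexed by a variable, quadratic terms by a pair of variables). -/
def QUBO.inc (H : QUBO) : SimpleGraph (ℕ ⊕ (ℕ ⊕ ℕ × ℕ)) :=
  SimpleGraph.fromRel (fun a b =>
    (∃ i, a = Sum.inl i ∧ b = Sum.inr (Sum.inl i) ∧ H.lin i ≠ 0) ∨
    (∃ x i j, a = Sum.inl x ∧ b = Sum.inr (Sum.inr (i, j)) ∧ H.quad i j ≠ 0 ∧ (x = i ∨ x = j)))

noncomputable def QUBO.tw (H : QUBO) : ℕ∞ := _root_.tw H.primal

noncomputable def QUBO.itw (H : QUBO) : ℕ∞ := _root_.tw H.inc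

/-- An assignment satisfies an (unweighted) CNF if it satisfies every clause. -/
def satCNF (β : ℕ → Bool) (φ : Finset Clause) : Prop := ∀ c ∈ φ, satClause β c

/-- The weight of an assignment: the sum of weights of the variables set to true. -/
noncomputable def wOf (φ : Finset Clause) (w : ℕ → ℕ) (β : ℕ → Bool) : ℕ :=
  ∑ x ∈ (cnfVars φ).filter (fun x => β x = true), w x

/-- The satisfying assignments of a CNF, represented as the subsets of its variable set
consisting of the variables set to true. -/
noncomputable def satSets (φ : Finset Clause) : Finset (Finset ℕ) :=
  (cnfVars φ).powerset.filter (fun S => ∀ c ∈ φ, ∃ l ∈ c, ((l.var ∈ S) ↔ l.pos = true))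

/-!
No auxiliary variables are needed. A positive term `q xᵢxⱼ` is the cost of the clause
`¬xᵢ ∨ ¬xⱼ` of weight `q`; a negative one is `|q|·[xᵢ ∧ ¬xⱼ] + q xᵢ`, the cost of `¬xᵢ ∨ xⱼ`
plus a linear term. All linear terms of `xᵢ` are gathered into one unit clause, `xᵢ` or `¬xᵢ`
according to the sign of the total coefficient `effLin i`, whose cost is that coefficient times
`xᵢ` up to a constant. So the cost of `φ` is `H + Δ` on every assignment.

The primal graph of `φ` is that of `H`. The incidence graph of `φ` maps injectively into the
incidence graph of `H` with one pendant vertex added per unit clause, and a tree decomposition of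
width `k` extends to pendant vertices by hanging a bag `{x, c}` off a bag containing `x`, which
gives width `max k 1`.
-/

namespace SimpleGraph

variable {V V' W : Type*}

def withPendants (G : SimpleGraph V) (a : W → V) : SimpleGraph (V ⊕ W) where
  Adj
    | .inl u, .inl v => G.Adj u v
    | .inl u, .inr w => u = a w
    | .inr w, .inl u => u = a w
    | .inr _, .inr _ => False
  symm := ⟨by
    rintro (u | w) (v | w') h
    exacts [h.symm, h, h, h]⟩
  loopless := ⟨by
    rintro (u | w) h
    exacts [G.loopless.irrefl u h, h]⟩

theorem Reachable.map_of_adj_imp {G : SimpleGraph V} {G' : SimpleGraph V'} (f : V → V')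
    (hf : ∀ ⦃x y⦄, G.Adj x y → f x = f y ∨ G'.Adj (f x) (f y)) {x y : V}
    (h : G.Reachable x y) : G'.Reachable (f x) (f y) := by
  obtain ⟨p⟩ := h
  induction p with
  | nil => rfl
  | cons hadj _ ih => exact (hf hadj).elim (· ▸ ih) (·.reachable.trans ih)

section withPendants

variable {G : SimpleGraph V} {a : W → V}

@[simp] theorem withPendants_adj_inl_inl {u v : V} :
    (G.withPendants a).Adj (.inl u) (.inl v) ↔ G.Adj u v := .rfl

@[simp] theorem withPendants_adj_inl_inr {u : V} {w : W} :
    (G.withPendants a).Adj (.inl u) (.inr w) ↔ u = a w := .rfl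

@[simp] theorem withPendants_adj_inr_inl {u : V} {w : W} :
    (G.withPendants a).Adj (.inr w) (.inl u) ↔ u = a w := .rfl

theorem IsAcyclic.withPendants (hG : G.IsAcyclic) (a : W → V) :
    (G.withPendants a).IsAcyclic := by
  rw [isAcyclic_iff_forall_adj_isBridge] at hG ⊢
  have pendant : ∀ w, (G.withPendants a).IsBridge s(.inr w, .inl (a w)) := by
    intro w hr
    obtain ⟨u | w', h, hne⟩ := hr.nonempty_neighborSet_left Sum.inr_ne_inl
    · exact hne (by simp_all)
    · exact h
  rintro (u | w) (v | w') h
  · -- collapsing each pendant vertex onto its anchor maps a detour around the edge into `G`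
    have collapse : ∀ ⦃x y⦄, ((G.withPendants a).deleteEdges {s(.inl u, .inl v)}).Adj x y →
        Sum.elim id a x = Sum.elim id a y ∨
          (G.deleteEdges {s(u, v)}).Adj (Sum.elim id a x) (Sum.elim id a y) := by
      rintro (x | x) (y | y) ⟨hxy, hne⟩
      · exact .inr ⟨hxy, by simpa using hne⟩
      · exact .inl hxy
      · exact .inl (Eq.symm hxy)
      · exact hxy.elim
    exact fun hr => hG h (hr.map_of_adj_imp _ collapse)
  · rw [Sym2.eq_swap, show u = a w' from h]
    exact pendant w'
  · rw [show v = a w from h]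
    exact pendant w
  · exact h.elim

theorem IsTree.withPendants (hG : G.IsTree) (a : W → V) : (G.withPendants a).IsTree := by
  refine ⟨?_, hG.isAcyclic.withPendants a⟩
  obtain ⟨v₀⟩ := hG.connected.nonempty
  have reach_inl : ∀ v, (G.withPendants a).Reachable (.inl v₀) (.inl v) := fun v =>
    (hG.connected.preconnected v₀ v).map (⟨Sum.inl, id⟩ : G →g G.withPendants a)
  rw [connected_iff_exists_forall_reachable]
  refine ⟨.inl v₀, ?_⟩
  rintro (v | w)
  · exact reach_inl v
  · exact (reach_inl (a w)).trans (Adj.reachable (by simp))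

end withPendants

end SimpleGraph

section TreeDecomp

variable {V V' : Type} {G : SimpleGraph V} {G' : SimpleGraph V'} {k : ℕ}

theorem HasTD.comap (f : G' →g G) (hf : Function.Injective f) (h : HasTD G k) : HasTD G' k := by
  obtain ⟨T, TG, D, hw⟩ := h
  refine ⟨T, TG, ⟨D.isTree, fun t => (D.bag t).preimage f hf.injOn, ?_, ?_, ?_⟩, ?_⟩
  · intro v
    simpa using D.covers_vertex (f v)
  · intro u v huv
    simpa using D.covers_edge (f u) (f v) (f.map_adj huv)
  · intro v
    have hS : {t | v ∈ (D.bag t).preimage f hf.injOn} = {t | f v ∈ D.bag t} := by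
      ext
      exact Finset.mem_preimage
    exact hS ▸ D.connected (f v)
  · intro t
    calc _ ≤ (D.bag t).card :=
          Finset.card_le_card_of_injOn f (fun _ hx => by simpa using hx) hf.injOn
      _ ≤ k + 1 := hw t

theorem HasTD.withPendants {W : Type} (a : W → V) (h : HasTD G k) :
    HasTD (G.withPendants a) (max k 1) := by
  obtain ⟨T, TG, D, hw⟩ := h
  choose τ hτ using D.covers_vertex
  let bag : T ⊕ W → Finset (V ⊕ W)
    | .inl t => (D.bag t).map .inl
    | .inr w => {.inl (a w), .inr w}
  refine ⟨T ⊕ W, TG.withPendants (τ ∘ a), ⟨D.isTree.withPendants _, bag, ?_, ?_, ?_⟩, ?_⟩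
  · rintro (v | w)
    exacts [⟨.inl (τ v), by simpa [bag] using hτ v⟩, ⟨.inr w, by simp [bag]⟩]
  · rintro (u | w) (v | w') huv
    · obtain ⟨t, hu, hv⟩ := D.covers_edge u v huv
      exact ⟨.inl t, by simpa [bag] using hu, by simpa [bag] using hv⟩
    · exact ⟨.inr w', by simp [bag, show u = a w' from huv]⟩
    · exact ⟨.inr w, by simp [bag, show v = a w from huv]⟩
    · exact huv.elim
  · intro x
    rw [SimpleGraph.connected_iff_exists_forall_reachable]
    rcases x with v | w
    · refine ⟨⟨.inl (τ v), by simpa [bag] using hτ v⟩, ?_⟩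
      rintro ⟨t | w, ht⟩
      · let lift : TG.induce {t | v ∈ D.bag t} →g (TG.withPendants (τ ∘ a)).induce
            {n | .inl v ∈ bag n} := ⟨fun t => ⟨.inl t.1, show .inl v ∈ (D.bag t.1).map .inl from
            Finset.mem_map_of_mem _ t.2⟩, id⟩
        exact ((D.connected v).preconnected ⟨τ v, hτ v⟩ ⟨t, by simpa [bag] using ht⟩).map lift
      · obtain rfl : v = a w := by simpa [bag] using ht
        exact SimpleGraph.Adj.reachable (show τ (a w) = τ (a w) from rfl)
    · refine ⟨⟨.inr w, by simp [bag]⟩, ?_⟩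
      rintro ⟨t | w', ht⟩
      · simp [bag] at ht
      · obtain rfl : w = w' := by simpa [bag] using ht
        rfl
  · rintro (t | w)
    · simpa [bag] using (hw t).trans (by omega)
    · calc (bag (.inr w)).card ≤ 2 := Finset.card_le_two
        _ ≤ max k 1 + 1 := by omega

theorem tw_le_of_hasTD (h : HasTD G k) : tw G ≤ k :=
  sInf_le ⟨k, rfl, h⟩

theorem tw_le_max_one_of_hasTD (h : ∀ k, HasTD G k → HasTD G' (max k 1)) :
    tw G' ≤ max (tw G) 1 := by
  rcases Set.eq_empty_or_nonempty {x : ℕ∞ | ∃ k : ℕ, x = k ∧ HasTD G k} with hS | hS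
  · simp [tw, hS]
  · obtain ⟨k, hk, hTD⟩ := csInf_mem hS
    rw [show tw G = k from hk]
    exact (tw_le_of_hasTD (h k hTD)).trans (by simp [le_total])

end TreeDecomp

def WCNF.ofFamily {ι : Type*} (s : Finset ι) (g : ι → Clause) (u : ι → ℕ) : WCNF where
  clauses := s.image g
  weight c := ((∑ i ∈ s with g i = c, u i : ℕ) : ℕ∞)

theorem WCNF.costA_ofFamily {ι : Type*} (s : Finset ι) (g : ι → Clause) (u : ι → ℕ)
    (β : ℕ → Bool) :
    (WCNF.ofFamily s g u).costA β = ((∑ i ∈ s with ¬ satClause β (g i), u i : ℕ) : ℕ∞) := by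
  rw [WCNF.costA, WCNF.ofFamily, Finset.filter_image, Nat.cast_sum]
  refine Finset.sum_image' _ fun i hi => ?_
  rw [Finset.filter_filter, ← Nat.cast_sum]
  refine congrArg _ (Finset.sum_congr (Finset.filter_congr fun j _ => ?_) fun _ _ => rfl)
  exact ⟨fun h => ⟨h ▸ (Finset.mem_filter.1 hi).2, h⟩, And.right⟩

theorem bval_cost_unit (L : ℤ) (b : Bool) :
    (if b = decide (L < 0) then 0 else (L.natAbs : ℤ)) = L * bval b + max (-L) 0 := by
  rcases lt_or_ge L 0 with hL | hL
  · rw [max_eq_left (by omega)]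
    cases b <;> simp [hL, bval, abs_of_neg]
  · rw [max_eq_right (by omega)]
    cases b <;> simp [hL.not_gt, bval, abs_of_nonneg hL]

theorem bval_cost_pair (q : ℤ) (b₁ b₂ : Bool) :
    (if b₁ = false ∨ b₂ = decide (q < 0) then 0 else (q.natAbs : ℤ)) =
      q * bval b₁ * bval b₂ - min q 0 * bval b₁ := by
  rcases lt_or_ge q 0 with hq | hq
  · rw [min_eq_left hq.le]
    cases b₁ <;> cases b₂ <;> simp [hq, bval, abs_of_neg]
  · rw [min_eq_right hq]
    cases b₁ <;> cases b₂ <;> simp [hq.not_gt, bval, abs_of_nonneg hq]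

namespace QUBO

variable (H : QUBO)

def effLin (i : ℕ) : ℤ := H.lin i + ∑ j ∈ H.vars, min (H.quad i j) 0

def unitClause (i : ℕ) : Clause := {⟨i, decide (H.effLin i < 0)⟩}

def pairClause (p : ℕ × ℕ) : Clause := {⟨p.1, false⟩, ⟨p.2, decide (H.quad p.1 p.2 < 0)⟩}

def quadSupport : Finset (ℕ × ℕ) := (H.vars ×ˢ H.vars).filter fun p => H.quad p.1 p.2 ≠ 0

noncomputable def toWCNF : WCNF :=
  WCNF.ofFamily (H.vars.disjSum H.quadSupport) (Sum.elim H.unitClause H.pairClause)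
    (Sum.elim (fun i => (H.effLin i).natAbs) fun p => (H.quad p.1 p.2).natAbs)

def offset : ℤ := ∑ i ∈ H.vars, max (-H.effLin i) 0

variable {H}

theorem satClause_unitClause {β : ℕ → Bool} {i : ℕ} :
    satClause β (H.unitClause i) ↔ β i = decide (H.effLin i < 0) := by
  simp [unitClause, satClause, satLit]

theorem satClause_pairClause {β : ℕ → Bool} {p : ℕ × ℕ} :
    satClause β (H.pairClause p) ↔ β p.1 = false ∨ β p.2 = decide (H.quad p.1 p.2 < 0) := by
  simp [pairClause, satClause, satLit]

theorem mem_quadSupport {p : ℕ × ℕ} : p ∈ H.quadSupport ↔ H.quad p.1 p.2 ≠ 0 :=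
  ⟨fun h => (Finset.mem_filter.1 h).2, fun h =>
    Finset.mem_filter.2 ⟨Finset.mem_product.2 (H.quad_supp _ _ h), h⟩⟩

theorem eval_congr {β x : ℕ → Bool} (h : ∀ i ∈ H.vars, β i = x i) : H.eval β = H.eval x := by
  unfold eval
  congr 1
  · exact Finset.sum_congr rfl fun i hi => by rw [h i hi]
  · exact Finset.sum_congr rfl fun i hi => Finset.sum_congr rfl fun j hj => by rw [h i hi, h j hj]

theorem costA_toWCNF (H : QUBO) (β : ℕ → Bool) :
    ∃ n : ℕ, H.toWCNF.costA β = n ∧ (n : ℤ) = H.eval β + H.offset := by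
  refine ⟨_, WCNF.costA_ofFamily .., ?_⟩
  have hpair : ∑ p ∈ H.quadSupport, (H.quad p.1 p.2 * bval (β p.1) * bval (β p.2)
        - min (H.quad p.1 p.2) 0 * bval (β p.1)) =
      ∑ i ∈ H.vars, ∑ j ∈ H.vars,
        (H.quad i j * bval (β i) * bval (β j) - min (H.quad i j) 0 * bval (β i)) := by
    rw [quadSupport, Finset.sum_filter_of_ne, Finset.sum_product]
    intro p _ hp hq
    simp [hq] at hp
  push_cast
  rw [Finset.sum_filter, Finset.sum_disjSum]
  simp only [Sum.elim_inl, Sum.elim_inr, ite_not, satClause_unitClause, satClause_pairClause,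
    bval_cost_unit, bval_cost_pair, hpair]
  simp only [eval, offset, effLin, Finset.sum_add_distrib, Finset.sum_sub_distrib, add_mul,
    Finset.sum_mul]
  ring

theorem costA_toWCNF_le_iff {β γ : ℕ → Bool} :
    H.toWCNF.costA β ≤ H.toWCNF.costA γ ↔ H.eval β ≤ H.eval γ := by
  obtain ⟨m, hm, hmβ⟩ := H.costA_toWCNF β
  obtain ⟨n, hn, hnγ⟩ := H.costA_toWCNF γ
  rw [hm, hn, Nat.cast_le, ← Nat.cast_le (α := ℤ), hmβ, hnγ, add_le_add_iff_right]

theorem varsOf_unitClause {i : ℕ} : (H.unitClause i).varsOf = {i} := by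
  simp [unitClause, Clause.varsOf]

theorem varsOf_pairClause {p : ℕ × ℕ} : (H.pairClause p).varsOf = {p.1, p.2} := by
  simp [pairClause, Clause.varsOf, Finset.image_insert]

theorem mem_toWCNF_clauses {c : Clause} :
    c ∈ H.toWCNF.clauses ↔
      (∃ i ∈ H.vars, H.unitClause i = c) ∨ ∃ p ∈ H.quadSupport, H.pairClause p = c := by
  simp [toWCNF, WCNF.ofFamily, Finset.mem_disjSum]

theorem vars_subset_toWCNF_vars : H.vars ⊆ H.toWCNF.vars := fun i hi =>
  Finset.mem_biUnion.2 ⟨H.unitClause i, mem_toWCNF_clauses.2 (.inl ⟨i, hi, rfl⟩),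
    by simp [varsOf_unitClause]⟩

theorem primalOf_toWCNF : primalOf H.toWCNF.clauses = H.primal := by
  have quad_of_mem : ∀ u v, (∃ c ∈ H.toWCNF.clauses, u ∈ c.varsOf ∧ v ∈ c.varsOf) → u ≠ v →
      H.quad u v ≠ 0 ∨ H.quad v u ≠ 0 := by
    rintro u v ⟨c, hc, hu, hv⟩ hne
    rcases mem_toWCNF_clauses.1 hc with ⟨i, -, rfl⟩ | ⟨⟨a, b⟩, hp, rfl⟩
    · simp only [varsOf_unitClause, Finset.mem_singleton] at hu hv
      exact (hne (hu.trans hv.symm)).elim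
    · rw [mem_quadSupport] at hp
      simp only [varsOf_pairClause, Finset.mem_insert, Finset.mem_singleton] at hu hv
      rcases hu with rfl | rfl <;> rcases hv with rfl | rfl <;> simp_all
  have mem_of_quad : ∀ u v, H.quad u v ≠ 0 →
      ∃ c ∈ H.toWCNF.clauses, u ∈ c.varsOf ∧ v ∈ c.varsOf := fun u v h =>
    ⟨H.pairClause (u, v), mem_toWCNF_clauses.2 (.inr ⟨_, mem_quadSupport.2 h, rfl⟩),
      by simp [varsOf_pairClause]⟩
  ext u v
  simp only [primalOf, QUBO.primal, SimpleGraph.fromRel_adj]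
  constructor
  · rintro ⟨hne, h | h⟩
    exacts [⟨hne, quad_of_mem u v h hne⟩, ⟨hne, (quad_of_mem v u h hne.symm).symm⟩]
  · rintro ⟨hne, h | h⟩
    exacts [⟨hne, .inl (mem_of_quad u v h)⟩, ⟨hne, .inr (mem_of_quad v u h)⟩]

noncomputable def incMap (H : QUBO) : ℕ ⊕ Clause → (ℕ ⊕ (ℕ ⊕ ℕ × ℕ)) ⊕ Clause
  | .inl x => .inl (.inl x)
  | .inr c => if h : ∃ p ∈ H.quadSupport, H.pairClause p = c then .inl (.inr (.inr h.choose))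
      else .inr c

theorem incMap_injective : Function.Injective H.incMap := by
  rintro (x | c) (y | c') h <;> simp only [incMap] at h
  · simpa using h
  · split at h <;> simp at h
  · split at h <;> simp at h
  · split at h <;> split at h
    · rename_i h₁ h₂
      rw [← h₁.choose_spec.2, ← h₂.choose_spec.2]
      simp_all
    all_goals simp_all

theorem incMap_adj {x : ℕ} {c : Clause} (hc : c ∈ H.toWCNF.clauses) (hx : x ∈ c.varsOf) :
    (H.inc.withPendants fun c : Clause => .inl (c.varsOf.sup id)).Adj
      (H.incMap (.inl x)) (H.incMap (.inr c)) := by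
  by_cases h : ∃ p ∈ H.quadSupport, H.pairClause p = c
  · obtain ⟨hp, hpc⟩ := h.choose_spec
    rw [← hpc, varsOf_pairClause] at hx
    show (H.inc.withPendants _).Adj (.inl (.inl x)) (dite _ _ _)
    rw [dif_pos h, SimpleGraph.withPendants_adj_inl_inl, QUBO.inc, SimpleGraph.fromRel_adj]
    exact ⟨by simp, .inl (.inr ⟨x, h.choose.1, h.choose.2, rfl, rfl, mem_quadSupport.1 hp,
      by simpa only [Finset.mem_insert, Finset.mem_singleton] using hx⟩)⟩
  · obtain ⟨i, -, rfl⟩ := (mem_toWCNF_clauses.1 hc).resolve_right h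
    show (H.inc.withPendants _).Adj (.inl (.inl x)) (dite _ _ _)
    rw [dif_neg h, SimpleGraph.withPendants_adj_inl_inr]
    simpa [varsOf_unitClause] using hx

noncomputable def incHom :
    incOf H.toWCNF.clauses →g H.inc.withPendants fun c : Clause => .inl (c.varsOf.sup id) where
  toFun := H.incMap
  map_rel' := by
    rintro _ _ ⟨-, ⟨x, c, rfl, rfl, hc, hx⟩ | ⟨x, c, rfl, rfl, hc, hx⟩⟩
    exacts [incMap_adj hc hx, (incMap_adj hc hx).symm]

theorem itw_toWCNF_le : H.toWCNF.itw ≤ max H.itw 1 :=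
  tw_le_max_one_of_hasTD fun _ hk => (hk.withPendants _).comap incHom incMap_injective

end QUBO

/-- every QUBO `H` translates into a WCNF `φ` (whose variables include those
of `H`) and an integer `Δ` such that for every `{0,1}`-assignment `x`, the minimum cost
over finite-cost assignments of `φ` extending `x` equals `H(x) + Δ`; in particular the
restrictions of the minimum-cost assignments of `φ` are exactly the ground states of `H`.
Moreover `tw φ ≤ max(tw H, 2)`, `tw φ ≤ tw H + 1`, `itw φ ≤ max(itw H, 2)`, and
`itw φ ≤ itw H + 1`. -/
theorem stmt9 (H : QUBO) :
    ∃ (φ : WCNF) (Δ : ℤ),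
      H.vars ⊆ φ.vars ∧
      (∀ x : ℕ → Bool, ∃ m : ℕ,
        (m : ℤ) = H.eval x + Δ ∧
        (∃ β, (∀ i ∈ H.vars, β i = x i) ∧ φ.costA β = (m : ℕ∞)) ∧
        (∀ β, (∀ i ∈ H.vars, β i = x i) → (m : ℕ∞) ≤ φ.costA β)) ∧
      (∀ β, (∀ γ, φ.costA β ≤ φ.costA γ) → H.IsGround β) ∧
      (∀ x, H.IsGround x → ∃ β, (∀ i ∈ H.vars, β i = x i) ∧ ∀ γ, φ.costA β ≤ φ.costA γ) ∧
      φ.tw ≤ max H.tw 2 ∧ φ.tw ≤ H.tw + 1 ∧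
      φ.itw ≤ max H.itw 2 ∧ φ.itw ≤ H.itw + 1 := by
  have htw : H.toWCNF.tw = H.tw := congrArg _root_.tw QUBO.primalOf_toWCNF
  refine ⟨H.toWCNF, H.offset, QUBO.vars_subset_toWCNF_vars, fun x => ?_,
    fun β hβ y => QUBO.costA_toWCNF_le_iff.1 (hβ y),
    fun x hx => ⟨x, fun _ _ => rfl, fun γ => QUBO.costA_toWCNF_le_iff.2 (hx γ)⟩,
    htw ▸ le_max_left _ _, htw ▸ le_self_add,
    QUBO.itw_toWCNF_le.trans (max_le_max le_rfl one_le_two),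
    QUBO.itw_toWCNF_le.trans (max_le le_self_add le_add_self)⟩
  obtain ⟨n, hn, hnx⟩ := H.costA_toWCNF x
  exact ⟨n, hnx, ⟨x, fun _ _ => rfl, hn⟩,
    fun β hβ => hn ▸ QUBO.costA_toWCNF_le_iff.2 (QUBO.eval_congr hβ).ge⟩
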